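/- For all n ≥ 3 and q ≥ 35, f(n,q) is at most a tower of height n-1 of q's: f(3,q) ≤ q^q, and inductively q·f(n,q) ≤ T implies f(n+1,q) ≤ q^{T-1} whenever T ≥ q^q. -/
import Mathlib


/-- Zimin words over the alphabet `ℕ`. -/
def Zimin : ℕ → List ℕ
  | 0 => []
  | n + 1 => Zimin n ++ [n + 1] ++ Zimin n

/-- `X` is a copy of `Z_n`: it is obtained by substituting a nonempty word for
each letter of the Zimin word `Z_n`. -/
def IsZiminCopy {α : Type*} (n : ℕ) (X : List α) : Prop :=
  ∃ σ : ℕ → List α, (∀ i, σ i ≠ []) ∧ X = (Zimin n).flatMap σ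

/-- `w` contains a copy of `Z_n` as a contiguous subword (infix). -/
def ContainsZimin {α : Type*} (n : ℕ) (w : List α) : Prop :=
  ∃ X : List α, IsZiminCopy n X ∧ X <:+: w

/-- `f(n,q)`: the least `N` such that every word of length `N` over `Fin q`
contains a copy of `Z_n`. -/
noncomputable def zf (n q : ℕ) : ℕ :=
  sInf {N | ∀ w : List (Fin q), w.length = N → ContainsZimin n w}

/-- Towers: `tower q 1 = q`, `tower q (k+1) = q ^ tower q k`. -/
def tower (q : ℕ) : ℕ → ℕ
  | 0 => 1
  | k + 1 => q ^ tower q k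

lemma zimin_mem_le {n a : ℕ} (h : a ∈ Zimin n) : a ≤ n := by
  induction n with
  | zero => simp [Zimin] at h
  | succ n ih =>
    simp only [Zimin, List.mem_append, List.mem_singleton] at h
    rcases h with (h | h) | h
    · exact (ih h).trans (Nat.le_succ n)
    · omega
    · exact (ih h).trans (Nat.le_succ n)

lemma flatMap_congr' {α β : Type*} {l : List α} {f g : α → List β}
    (h : ∀ a ∈ l, f a = g a) : l.flatMap f = l.flatMap g := by
  induction l with
  | nil => rfl
  | cons a t ih =>
    rw [List.flatMap_cons, List.flatMap_cons, h a (by simp),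
      ih (fun x hx => h x (by simp [hx]))]

lemma ziminCopy_glue {α : Type*} {n : ℕ} {z m : List α}
    (hz : IsZiminCopy n z) (hm : m ≠ []) :
    IsZiminCopy (n + 1) (z ++ m ++ z) := by
  obtain ⟨σ, hσ, rfl⟩ := hz
  refine ⟨fun k => if k = n + 1 then m else σ k, ?_, ?_⟩
  · intro i
    by_cases h : i = n + 1 <;> simp [h, hm, hσ i]
  · have hcongr : (Zimin n).flatMap (fun k => if k = n + 1 then m else σ k)
        = (Zimin n).flatMap σ := by
      refine flatMap_congr' (fun a ha => ?_)
      have : a ≠ n + 1 := by have := zimin_mem_le ha; omega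
      simp [this]
    show _ = (Zimin n ++ [n+1] ++ Zimin n).flatMap _
    rw [List.flatMap_append, List.flatMap_append, hcongr]
    simp

lemma master {q : ℕ} (n W K : ℕ)
    (T : Finset (List (Fin q))) (hT : T.card ≤ K)
    (h : ∀ u : List (Fin q), u.length = W → ∃ t ∈ T, t <:+: u ∧ ContainsZimin n t)
    (w : List (Fin q)) (hw : K * (W + 1) + W ≤ w.length) :
    ContainsZimin (n + 1) w := by
  classical
  set u : ℕ → List (Fin q) := fun i => (w.drop (i * (W + 1))).take W with hu_def
  have hlen : ∀ i ≤ K, (u i).length = W := by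
    intro i hi
    have h1 : i * (W + 1) ≤ K * (W + 1) := Nat.mul_le_mul_right _ hi
    simp only [hu_def, List.length_take, List.length_drop]
    omega
  set g : ℕ → List (Fin q) := fun i =>
    if hi : (u i).length = W then (h (u i) hi).choose else [] with hg_def
  have hg : ∀ i ≤ K, g i ∈ T ∧ g i <:+: u i ∧ ContainsZimin n (g i) := by
    intro i hi
    have hl := hlen i hi
    simp only [hg_def, dif_pos hl]
    exact (h (u i) hl).choose_spec
  -- pigeonhole
  obtain ⟨i, hi, j, hj, hne, heq⟩ :=
    Finset.exists_ne_map_eq_of_card_lt_of_maps_to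
      (s := Finset.range (K + 1)) (t := T)
      (by simpa using Nat.lt_succ_of_le hT)
      (fun a ha => (hg a (by simpa using Nat.lt_succ_iff.mp (Finset.mem_range.mp ha))).1)
  simp only [Finset.mem_range, Nat.lt_succ_iff] at hi hj
  -- wlog i < j
  have key : ∀ i j : ℕ, i < j → j ≤ K → g i = g j → ContainsZimin (n + 1) w := by
    clear hne heq hi hj i j
    intro i j hij hj heq
    have hi : i ≤ K := by omega
    obtain ⟨-, hinf_i, hcz⟩ := hg i hi
    obtain ⟨-, hinf_j, -⟩ := hg j hj
    rw [heq] at hinf_i hcz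
    set t := g j with ht_def
    set a := i * (W + 1) with ha_def
    set b := j * (W + 1) with hb_def
    have hab : a + W + 1 ≤ b := by
      have : (i + 1) * (W + 1) ≤ j * (W + 1) := Nat.mul_le_mul_right _ hij
      simp only [ha_def, hb_def]; nlinarith
    have hbK : b ≤ K * (W + 1) := Nat.mul_le_mul_right _ hj
    set m := b - (a + W) with hm_def
    set mid := (w.drop (a + W)).take m with hmid_def
    have hmidlen : mid.length = m := by
      simp only [hmid_def, List.length_take, List.length_drop]
      omega
    have hmidne : mid ≠ [] := by
      intro hc
      have := hmidlen
      rw [hc] at this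
      simp only [List.length_nil] at this
      omega
    -- decomposition
    have hD : (w.drop a).take (W + (m + W)) = u i ++ (mid ++ u j) := by
      rw [List.take_add, List.take_add, List.drop_drop, List.drop_drop]
      have e1 : a + W = a + W := rfl
      have e2 : a + W + m = b := by omega
      rw [e2]
    have hDinf : u i ++ (mid ++ u j) <:+: w := by
      rw [← hD]
      exact ((List.take_prefix _ _).isInfix).trans ((List.drop_suffix a w).isInfix)
    obtain ⟨p1, s1, hps1⟩ := hinf_i
    obtain ⟨p3, s3, hps3⟩ := hinf_j
    obtain ⟨z, hzcopy, p2, s2, hps2⟩ := hcz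
    refine ⟨z ++ (s2 ++ s1 ++ mid ++ p3 ++ p2) ++ z,
      ziminCopy_glue hzcopy (by simp [hmidne]), ?_⟩
    refine List.IsInfix.trans ⟨p1 ++ p2, s2 ++ s3, ?_⟩ hDinf
    rw [← hps1, ← hps3, ← hps2]
    simp [List.append_assoc]
  rcases lt_or_gt_of_ne hne with h' | h'
  · exact key i j h' hj heq
  · exact key j i h' hi heq.symm

def Fresh {α : Type*} (y : List α) : Prop :=
  ¬ ∃ (c : α) (l1 l2 l3 : List α), l2 ≠ [] ∧ y = l1 ++ c :: (l2 ++ c :: l3)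

lemma Fresh.of_append_left {α : Type*} {x y : List α} (h : Fresh (x ++ y)) : Fresh y := by
  rintro ⟨c, l1, l2, l3, hl2, rfl⟩
  exact h ⟨c, x ++ l1, l2, l3, hl2, by simp [List.append_assoc]⟩

lemma Fresh.tail {α : Type*} {a : α} {y : List α} (h : Fresh (a :: y)) : Fresh y :=
  Fresh.of_append_left (x := [a]) h

lemma not_fresh_of_get {α : Type*} {y : List α} {i j : ℕ} (hij : i + 2 ≤ j)
    (hj : j < y.length) (hget : y[i]'(by omega) = y[j]) : ¬ Fresh y := by
  intro hf
  refine hf ⟨y[j], y.take i, (y.drop (i+1)).take (j - i - 1), y.drop (j+1), ?_, ?_⟩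
  · have : ((y.drop (i+1)).take (j - i - 1)).length = j - i - 1 := by
      simp only [List.length_take, List.length_drop]; omega
    intro hc; rw [hc] at this; simp at this; omega
  · conv_lhs => rw [← List.take_append_drop i y]
    rw [List.drop_eq_getElem_cons (by omega : i < y.length), hget]
    congr 1
    congr 1
    conv_lhs => rw [← List.take_append_drop (j - i - 1) (y.drop (i+1))]
    rw [List.drop_drop]
    have : i + 1 + (j - i - 1) = j := by omega
    rw [this, List.drop_eq_getElem_cons hj]

lemma not_fresh_of_long {q : ℕ} {y : List (Fin q)} (hy : 2 * q + 1 ≤ y.length) :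
    ¬ Fresh y := by
  have hcard : Fintype.card (Fin q × Fin 2) < Fintype.card (Fin (2 * q + 1)) := by
    simp; omega
  obtain ⟨i, j, hne, heq⟩ := Fintype.exists_ne_map_eq_of_card_lt
    (fun i : Fin (2 * q + 1) =>
      ((y.get ⟨i, by omega⟩ : Fin q), (⟨i.val % 2, by omega⟩ : Fin 2))) hcard
  have h1 : y[(i : ℕ)]'(by omega) = y[(j : ℕ)]'(by omega) := congrArg Prod.fst heq
  have h2 : (i : ℕ) % 2 = (j : ℕ) % 2 := by
    have := congrArg Prod.snd heq
    exact congrArg Fin.val this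
  have hne' : (i : ℕ) ≠ (j : ℕ) := fun hc => hne (Fin.ext hc)
  rcases lt_or_gt_of_ne hne' with h | h
  · exact not_fresh_of_get (by omega) (by omega) h1
  · exact not_fresh_of_get (i := (j:ℕ)) (j := (i:ℕ)) (by omega) (by omega) h1.symm

lemma exists_block {q : ℕ} (u : List (Fin q)) (hu : 2 * q + 1 ≤ u.length) :
    ∃ (c : Fin q) (v : List (Fin q)), v ≠ [] ∧ Fresh (c :: v) ∧
      ([c] ++ v ++ [c]) <:+: u := by
  classical
  have hex : ∃ L, ¬ Fresh (u.take L) :=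
    ⟨2 * q + 1, not_fresh_of_long (by simp; omega)⟩
  set L := Nat.find hex with hL_def
  have hspec : ¬ Fresh (u.take L) := Nat.find_spec hex
  have hmin : ∀ L' < L, Fresh (u.take L') := fun L' h => by
    by_contra hc; exact absurd h (Nat.not_lt.mpr (Nat.find_le hc))
  have hLle : L ≤ 2 * q + 1 := Nat.find_le (not_fresh_of_long (y := u.take (2*q+1)) (by simp; omega))
  obtain ⟨c, l1, l2, l3, hl2, hdec⟩ := not_not.mp hspec
  have htlen : (u.take L).length = L := by simp; omega
  have hLlen : L = l1.length + l2.length + l3.length + 2 := by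
    rw [hdec] at htlen; simp at htlen; omega
  have hdec' : u.take L = (l1 ++ c :: l2 ++ [c]) ++ l3 := by
    rw [hdec]; simp [List.append_assoc]
  set L' := l1.length + l2.length + 2 with hL'_def
  have htake' : u.take L' = l1 ++ c :: l2 ++ [c] := by
    have h1 : (u.take L).take L' = u.take L' := by
      rw [List.take_take]; congr 1; omega
    rw [← h1, hdec', List.take_left' (by simp; omega)]
  have hnotfresh' : ¬ Fresh (u.take L') := by
    rw [htake']
    intro hf
    exact hf ⟨c, l1, l2, [], hl2, by simp [List.append_assoc]⟩
  have hLL' : L ≤ L' := Nat.find_le hnotfresh'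
  have hl3 : l3 = [] := by
    have : l3.length = 0 := by omega
    simpa [List.length_eq_zero_iff] using this
  have hfresh_pre : Fresh (l1 ++ c :: l2) := by
    have h1 : u.take (l1.length + l2.length + 1) = l1 ++ c :: l2 := by
      have h2 : (u.take L').take (l1.length + l2.length + 1)
          = u.take (l1.length + l2.length + 1) := by
        rw [List.take_take]; congr 1; omega
      rw [← h2, htake']
      have : l1 ++ c :: l2 ++ [c] = (l1 ++ c :: l2) ++ [c] := by simp
      rw [this, List.take_left' (by simp; omega)]
    rw [← h1]
    exact hmin _ (by omega)
  refine ⟨c, l2, hl2, Fresh.of_append_left hfresh_pre, ?_⟩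
  refine List.IsInfix.trans ⟨l1, [], ?_⟩ ((List.take_prefix L u).isInfix)
  rw [hdec, hl3]
  simp [List.append_assoc]

section Expand
variable {q : ℕ}

def expandW (d : List (Fin q)) (D : Finset (Fin q)) : List (Fin q) :=
  d.flatMap (fun a => if a ∈ D then [a, a] else [a])

lemma mem_expandW {a : Fin q} {d : List (Fin q)} {D : Finset (Fin q)} :
    a ∈ expandW d D ↔ a ∈ d := by
  simp only [expandW, List.mem_flatMap]
  constructor
  · rintro ⟨b, hb, hab⟩
    by_cases h : b ∈ D <;> simp [h] at hab <;> simp [hab, hb]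
  · intro ha
    refine ⟨a, ha, ?_⟩
    by_cases h : a ∈ D <;> simp [h]

lemma expandW_cons (a : Fin q) (d : List (Fin q)) (D : Finset (Fin q)) :
    expandW (a :: d) D = (if a ∈ D then [a, a] else [a]) ++ expandW d D := rfl

lemma expandW_congr {d : List (Fin q)} {D D' : Finset (Fin q)}
    (h : ∀ a ∈ d, (a ∈ D ↔ a ∈ D')) : expandW d D = expandW d D' := by
  unfold expandW
  induction d with
  | nil => rfl
  | cons a t ih =>
    rw [List.flatMap_cons, List.flatMap_cons,
      ih (fun x hx => h x (by simp [hx]))]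
    congr 1
    by_cases hD : a ∈ D
    · rw [if_pos hD, if_pos ((h a (by simp)).mp hD)]
    · rw [if_neg hD, if_neg (fun hc => hD ((h a (by simp)).mpr hc))]

lemma fresh_structure : ∀ N (y : List (Fin q)), y.length ≤ N → Fresh y →
    ∃ (d : List (Fin q)) (D : Finset (Fin q)), d.Nodup ∧ y = expandW d D := by
  intro N
  induction N with
  | zero =>
    intro y hy _
    have : y = [] := List.length_eq_zero_iff.mp (by omega)
    exact ⟨[], ∅, List.nodup_nil, by simp [this, expandW]⟩
  | succ N ih =>
    intro y hy hf
    match y with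
    | [] => exact ⟨[], ∅, List.nodup_nil, by simp [expandW]⟩
    | [c] => exact ⟨[c], ∅, by simp, by simp [expandW]⟩
    | c :: c' :: t' =>
      by_cases hcc : c = c'
      · subst hcc
        -- doubled head
        have hnotmem : c ∉ t' := by
          intro hmem
          obtain ⟨e1, e2, rfl⟩ := List.append_of_mem hmem
          exact hf ⟨c, [], c :: e1, e2, by simp, by simp⟩
        have hft' : Fresh t' := (hf.tail).tail
        obtain ⟨d', D', hnd', hexp'⟩ := ih t' (by simp at hy; omega) hft'
        have hcd' : c ∉ d' := fun hc => hnotmem (by rw [hexp']; exact mem_expandW.mpr hc)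
        refine ⟨c :: d', insert c D', by simp [hcd', hnd'], ?_⟩
        have hcongr : expandW d' (insert c D') = expandW d' D' :=
          expandW_congr (fun a ha => by
            have : a ≠ c := fun hc => hcd' (hc ▸ ha)
            simp [Finset.mem_insert, this])
        rw [expandW_cons, if_pos (Finset.mem_insert_self c D'), hcongr, ← hexp']
        rfl
      · -- single head
        have hnotmem : c ∉ c' :: t' := by
          intro hmem
          rcases List.mem_cons.mp hmem with h | h
          · exact hcc h
          · obtain ⟨e1, e2, rfl⟩ := List.append_of_mem h
            exact hf ⟨c, [], c' :: e1, e2, by simp, by simp⟩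
        have hft : Fresh (c' :: t') := hf.tail
        obtain ⟨d', D', hnd', hexp'⟩ := ih (c' :: t') (by simp at hy ⊢; omega) hft
        have hcd' : c ∉ d' := fun hc => hnotmem (by rw [hexp']; exact mem_expandW.mpr hc)
        refine ⟨c :: d', D'.erase c, by simp [hcd', hnd'], ?_⟩
        have hcongr : expandW d' (D'.erase c) = expandW d' D' :=
          expandW_congr (fun a ha => by
            have : a ≠ c := fun hc => hcd' (hc ▸ ha)
            simp [Finset.mem_erase, this])
        rw [expandW_cons, if_neg (by simp), hcongr, ← hexp']
        rfl

noncomputable def NDL (q : ℕ) : Finset (List (Fin q)) :=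
  (Finset.univ : Finset (Fin q)).powerset.biUnion (fun S => S.toList.permutations.toFinset)

noncomputable def FW (q : ℕ) : Finset (List (Fin q)) :=
  (NDL q).biUnion (fun d =>
    (Finset.univ : Finset (Fin q)).powerset.image (fun D => expandW d D))

lemma mem_FW_of_fresh {y : List (Fin q)} (hf : Fresh y) : y ∈ FW q := by
  obtain ⟨d, D, hnd, rfl⟩ := fresh_structure y.length y le_rfl hf
  have hdNDL : d ∈ NDL q := by
    unfold NDL
    rw [Finset.mem_biUnion]
    refine ⟨d.toFinset, by simp, ?_⟩
    rw [List.mem_toFinset, List.mem_permutations]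
    exact (List.toFinset_toList hnd).symm
  unfold FW
  rw [Finset.mem_biUnion]
  exact ⟨d, hdNDL, Finset.mem_image.mpr ⟨D, by simp, rfl⟩⟩

-- counting
lemma sum_descFactorial_le (q : ℕ) (hq : 1 ≤ q) :
    ∑ k ∈ Finset.range (q + 1), q.descFactorial k ≤ 3 * q.factorial := by
  have helper : ∀ m, m + 1 ≤ q →
      ∑ k ∈ Finset.range (m + 1), q.descFactorial k ≤ 2 * q.descFactorial m := by
    intro m
    induction m with
    | zero => intro _; simp
    | succ m ihm =>
      intro hm
      rw [Finset.sum_range_succ]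
      have h1 := ihm (by omega)
      have h2 : q.descFactorial (m + 1) = (q - m) * q.descFactorial m :=
        Nat.descFactorial_succ q m
      have h3 : 2 ≤ q - m := by omega
      have h4 : 2 * q.descFactorial m ≤ q.descFactorial (m + 1) := by
        rw [h2]; exact Nat.mul_le_mul_right _ h3
      omega
  obtain ⟨m, rfl⟩ : ∃ m, q = m + 1 := ⟨q - 1, by omega⟩
  have hr := helper m (by omega)
  have h5 : (m+1).descFactorial (m+1) = 1 * (m+1).descFactorial m := by
    rw [Nat.descFactorial_succ]; congr 1; omega
  have hdm : (m+1).descFactorial m = (m+1).factorial := by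
    have := Nat.descFactorial_self (m+1)
    omega
  have hsplit := Finset.sum_range_succ (fun k => (m+1).descFactorial k) (m+1)
  rw [Nat.descFactorial_self] at hsplit
  rw [hdm] at hr
  omega

lemma NDL_card_le (q : ℕ) (hq : 1 ≤ q) : (NDL q).card ≤ 3 * q.factorial := by
  refine le_trans (Finset.card_biUnion_le) ?_
  have h1 : ∀ S ∈ (Finset.univ : Finset (Fin q)).powerset,
      (S.toList.permutations.toFinset).card ≤ S.card.factorial := by
    intro S _
    refine le_trans (List.toFinset_card_le _) ?_
    rw [List.length_permutations, Finset.length_toList]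
  refine le_trans (Finset.sum_le_sum h1) ?_
  rw [Finset.sum_powerset]
  have h2 : ∀ j ∈ Finset.range ((Finset.univ : Finset (Fin q)).card + 1),
      ∑ S ∈ Finset.powersetCard j (Finset.univ : Finset (Fin q)), S.card.factorial
        = q.descFactorial j := by
    intro j hj
    have : ∀ S ∈ Finset.powersetCard j (Finset.univ : Finset (Fin q)),
        S.card.factorial = j.factorial := by
      intro S hS
      rw [(Finset.mem_powersetCard.mp hS).2]
    rw [Finset.sum_congr rfl this, Finset.sum_const, Finset.card_powersetCard,
      Finset.card_univ, Fintype.card_fin, smul_eq_mul,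
      Nat.descFactorial_eq_factorial_mul_choose, mul_comm]
  rw [Finset.sum_congr rfl h2, Finset.card_univ, Fintype.card_fin]
  exact sum_descFactorial_le q hq

lemma FW_card_le (q : ℕ) (hq : 1 ≤ q) : (FW q).card ≤ 3 * 2 ^ q * q.factorial := by
  refine le_trans (Finset.card_biUnion_le) ?_
  have h1 : ∀ d ∈ NDL q,
      ((Finset.univ : Finset (Fin q)).powerset.image (fun D => expandW d D)).card
        ≤ 2 ^ q := by
    intro d _
    refine le_trans (Finset.card_image_le) ?_
    rw [Finset.card_powerset, Finset.card_univ, Fintype.card_fin]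
  refine le_trans (Finset.sum_le_sum h1) ?_
  rw [Finset.sum_const, smul_eq_mul]
  calc (NDL q).card * 2 ^ q ≤ 3 * q.factorial * 2 ^ q :=
        Nat.mul_le_mul_right _ (NDL_card_le q hq)
    _ = 3 * 2 ^ q * q.factorial := by ring
end Expand

-- base case computation
lemma N1_base : (3 * 2 ^ 35 * Nat.factorial 35 + 1) * (4 * 35 + 4) ≤ 35 ^ 35 := by
  norm_num [Nat.factorial]

-- binomial sub-claim
lemma S_claim (q : ℕ) (hq : 35 ≤ q) : 87 * q ^ q ≤ 35 * (q + 1) ^ q := by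
  have hbin : (q + 1) ^ q = ∑ k ∈ Finset.range (q + 1), q ^ k * 1 ^ (q - k) * (q.choose k) := by
    exact_mod_cast add_pow q 1 q
  have hsub : ({q - 2, q - 1, q} : Finset ℕ) ⊆ Finset.range (q + 1) := by
    intro x hx
    simp only [Finset.mem_insert, Finset.mem_singleton] at hx
    simp only [Finset.mem_range]
    omega
  have hge : ∑ k ∈ ({q - 2, q - 1, q} : Finset ℕ), q ^ k * 1 ^ (q - k) * (q.choose k)
      ≤ (q + 1) ^ q := by
    rw [hbin]
    exact Finset.sum_le_sum_of_subset hsub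
  have hsum : ∑ k ∈ ({q - 2, q - 1, q} : Finset ℕ), q ^ k * 1 ^ (q - k) * (q.choose k)
      = q ^ (q - 2) * (q.choose (q - 2)) + q ^ (q - 1) * (q.choose (q - 1)) + q ^ q * 1 := by
    rw [Finset.sum_insert (by simp; omega), Finset.sum_insert (by simp; omega),
      Finset.sum_singleton]
    simp [Nat.choose_self]
    ring
  have hc1 : q.choose (q - 1) = q := by
    have := Nat.choose_symm (show 1 ≤ q by omega)
    rw [Nat.choose_one_right] at this
    exact this
  have hc2 : q.choose (q - 2) = q * (q - 1) / 2 := by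
    have := Nat.choose_symm (show 2 ≤ q by omega)
    rw [Nat.choose_two_right] at this
    exact this
  -- powers
  have hp1 : q ^ (q - 1) = q ^ (q - 2) * q := by
    rw [← pow_succ]; congr 1; omega
  have hpq : q ^ q = q ^ (q - 2) * q * q := by
    rw [← pow_succ, ← pow_succ]; congr 1; omega
  set P := q ^ (q - 2) with hP
  -- arithmetic
  have hr2 : (q * (q - 1) / 2) * 2 = q * (q - 1) := by
    apply Nat.div_mul_cancel
    rcases Nat.even_or_odd q with h | h
    · exact Dvd.dvd.mul_right h.two_dvd _
    · exact Dvd.dvd.mul_left (Nat.Odd.sub_odd h odd_one).two_dvd _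
  have hqq : q * q = q * (q - 1) + q := by
    have he : q - 1 + 1 = q := by omega
    calc q * q = q * (q - 1 + 1) := by rw [he]
      _ = q * (q - 1) + q := by ring
  -- goal: 87 * (P * q * q) ≤ 35 * (q+1)^q
  rw [hpq]
  have key : 87 * (q * q) ≤ 35 * ((q * (q - 1) / 2) + q * q + q * q) := by
    have h34 : 34 * q ≤ q * (q - 1) := by
      calc 34 * q = q * 34 := by ring
        _ ≤ q * (q - 1) := Nat.mul_le_mul_left q (by omega)
    omega
  calc 87 * (P * q * q) = P * (87 * (q * q)) := by ring
    _ ≤ P * (35 * ((q * (q - 1) / 2) + q * q + q * q)) := Nat.mul_le_mul_left P key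
    _ = 35 * (P * (q * (q - 1) / 2) + P * q * q + P * q * q) := by ring
    _ = 35 * (q ^ (q - 2) * (q * (q - 1) / 2) + q ^ (q - 1) * q + q ^ q * 1) := by
        rw [hp1, hpq]; ring
    _ ≤ 35 * ((q + 1) ^ q) := by
        apply Nat.mul_le_mul_left
        calc q ^ (q - 2) * (q * (q - 1) / 2) + q ^ (q - 1) * q + q ^ q * 1
            = q ^ (q - 2) * (q.choose (q - 2)) + q ^ (q - 1) * (q.choose (q - 1)) + q ^ q * 1 := by
              rw [hc1, hc2]
          _ = ∑ k ∈ ({q - 2, q - 1, q} : Finset ℕ), q ^ k * 1 ^ (q - k) * (q.choose k) := hsum.symm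
          _ ≤ (q + 1) ^ q := hge

lemma N1 (q : ℕ) (hq : 35 ≤ q) :
    (3 * 2 ^ q * Nat.factorial q + 1) * (4 * q + 4) ≤ q ^ q := by
  induction q, hq using Nat.le_induction with
  | base => exact N1_base
  | succ q hq ih =>
    have hS := S_claim q hq
    set B := 3 * 2 ^ q * Nat.factorial q + 1 with hB
    have h1 : 3 * 2 ^ (q + 1) * Nat.factorial (q + 1) + 1 ≤ 2 * (q + 1) * B := by
      rw [hB, Nat.factorial_succ]
      have : 3 * 2 ^ (q + 1) * ((q + 1) * Nat.factorial q)
          = 2 * (q + 1) * (3 * 2 ^ q * Nat.factorial q) := by ring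
      rw [this]
      nlinarith
    have h2 : (3 * 2 ^ (q + 1) * Nat.factorial (q + 1) + 1) * (4 * (q + 1) + 4)
        ≤ 2 * (q + 1) * B * (4 * q + 8) := by
      apply Nat.mul_le_mul h1
      omega
    -- 70 * (4q+8) ≤ 87 * (4q+4) for q ≥ 35
    have h3 : 35 * (2 * (q + 1) * B * (4 * q + 8)) ≤ 87 * ((q + 1) * (B * (4 * q + 4))) := by
      have hq' : 70 * (4 * q + 8) ≤ 87 * (4 * q + 4) := by omega
      calc 35 * (2 * (q + 1) * B * (4 * q + 8)) = (q + 1) * B * (70 * (4 * q + 8)) := by ring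
        _ ≤ (q + 1) * B * (87 * (4 * q + 4)) := Nat.mul_le_mul_left _ hq'
        _ = 87 * ((q + 1) * (B * (4 * q + 4))) := by ring
    have h4 : B * (4 * q + 4) ≤ q ^ q := ih
    have h5 : 87 * ((q + 1) * (B * (4 * q + 4))) ≤ 87 * ((q + 1) * q ^ q) := by
      apply Nat.mul_le_mul_left
      exact Nat.mul_le_mul_left _ h4
    have h6 : 87 * ((q + 1) * q ^ q) = (q + 1) * (87 * q ^ q) := by ring
    have h7 : (q + 1) * (87 * q ^ q) ≤ (q + 1) * (35 * (q + 1) ^ q) :=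
      Nat.mul_le_mul_left _ hS
    have h8 : (q + 1) * (35 * (q + 1) ^ q) = 35 * (q + 1) ^ (q + 1) := by
      rw [pow_succ]; ring
    have : 35 * ((3 * 2 ^ (q + 1) * Nat.factorial (q + 1) + 1) * (4 * (q + 1) + 4))
        ≤ 35 * (q + 1) ^ (q + 1) := by
      calc 35 * ((3 * 2 ^ (q + 1) * Nat.factorial (q + 1) + 1) * (4 * (q + 1) + 4))
          ≤ 35 * (2 * (q + 1) * B * (4 * q + 8)) := Nat.mul_le_mul_left _ h2
        _ ≤ 87 * ((q + 1) * (B * (4 * q + 4))) := h3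
        _ ≤ 87 * ((q + 1) * q ^ q) := h5
        _ = (q + 1) * (87 * q ^ q) := h6
        _ ≤ (q + 1) * (35 * (q + 1) ^ q) := h7
        _ = 35 * (q + 1) ^ (q + 1) := h8
    omega

lemma four_f_le (q f : ℕ) (hq : 35 ≤ q) (hf : 1 ≤ f) : 4 * f + 4 ≤ q ^ f := by
  induction f with
  | zero => omega
  | succ f ihf =>
    rcases Nat.eq_or_lt_of_le hf with h | h
    · simp [← h]; omega
    · have h1 := ihf (by omega)
      have h2 : q ^ (f + 1) = q ^ f * q := pow_succ q f
      have h3 : q ^ f * 2 ≤ q ^ f * q := Nat.mul_le_mul_left _ (by omega)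
      omega

-- assembly
lemma good3 (q : ℕ) (hq : 35 ≤ q) :
    ∀ w : List (Fin q), 3 * 2 ^ q * q.factorial * (2 * q + 2) + (2 * q + 1) ≤ w.length →
      ContainsZimin 3 w := by
  intro w hw
  have h3 : (3 : ℕ) = 2 + 1 := rfl
  rw [h3]
  refine master 2 (2 * q + 1) (3 * 2 ^ q * q.factorial)
    ((FW q).image (fun y => y ++ y.take 1))
    (le_trans (Finset.card_image_le) (FW_card_le q (by omega))) ?_ w (by rw [(show 2*q+1+1 = 2*q+2 by omega)]; exact hw)
  intro u hu
  obtain ⟨c, v, hv, hfresh, hinf⟩ := exists_block u (by omega)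
  refine ⟨(c :: v) ++ [c], ?_, ?_, ?_⟩
  · refine Finset.mem_image.mpr ⟨c :: v, mem_FW_of_fresh hfresh, ?_⟩
    simp
  · simpa using hinf
  · refine ⟨(c :: v) ++ [c], ⟨fun i => if i = 2 then v else [c], ?_, ?_⟩,
      List.infix_refl _⟩
    · intro i
      by_cases h : i = 2 <;> simp [h, hv]
    · show _ = (Zimin 2).flatMap _
      have hz2 : Zimin 2 = [1, 2, 1] := rfl
      rw [hz2]
      simp

lemma good_step (q n f : ℕ) (hq : 35 ≤ q)
    (hgood : ∀ w : List (Fin q), f ≤ w.length → ContainsZimin n w) :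
    ∀ w : List (Fin q), q ^ f * (f + 1) + f ≤ w.length → ContainsZimin (n + 1) w := by
  intro w hw
  classical
  refine master n f (q ^ f)
    ((Finset.univ : Finset (Fin f → Fin q)).image List.ofFn)
    (le_trans (Finset.card_image_le) (by simp [Fintype.card_fun])) ?_ w (by omega)
  intro u hu
  refine ⟨u, ?_, List.infix_refl u, hgood u (by omega)⟩
  refine Finset.mem_image.mpr ⟨fun j : Fin f => u.get (Fin.cast hu.symm j), ?_⟩
  refine ⟨Finset.mem_univ _, ?_⟩
  subst hu
  exact List.ofFn_get u

/-- For `n ≥ 3` and `q ≥ 35`, `f(n,q)` is at most a tower of `q`'s of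
height `n - 1`. -/
theorem zf_tower_upper (n q : ℕ) (hn : 3 ≤ n) (hq : 35 ≤ q) :
    zf n q ≤ tower q (n - 1) := by
  have key : ∀ m, 3 ≤ m → ∃ F, 1 ≤ F ∧ 2 * F ≤ tower q (m - 1) ∧
      ∀ w : List (Fin q), F ≤ w.length → ContainsZimin m w := by
    intro m hm
    induction m, hm using Nat.le_induction with
    | base =>
      set K := 3 * 2 ^ q * q.factorial with hK
      refine ⟨K * (2 * q + 2) + (2 * q + 1), by omega, ?_, good3 q hq⟩
      have ht2 : tower q 2 = q ^ q := by
        show q ^ (q ^ tower q 0) = q ^ q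
        norm_num [tower]
      show 2 * (K * (2 * q + 2) + (2 * q + 1)) ≤ tower q (3 - 1)
      have h1 : 2 * (K * (2 * q + 2) + (2 * q + 1)) ≤ (K + 1) * (4 * q + 4) := by
        have : 2 * (K * (2 * q + 2)) = K * (4 * q + 4) := by ring
        nlinarith
      have h2 := N1 q hq
      rw [(by norm_num : (3 : ℕ) - 1 = 2), ht2]
      calc 2 * (K * (2 * q + 2) + (2 * q + 1)) ≤ (K + 1) * (4 * q + 4) := h1
        _ ≤ q ^ q := h2
    | succ m hm ih =>
      obtain ⟨f, hf1, hft, hgood⟩ := ih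
      refine ⟨q ^ f * (f + 1) + f, by omega, ?_, good_step q m f hq hgood⟩
      have ht : tower q (m + 1 - 1) = q ^ tower q (m - 1) := by
        have he : m + 1 - 1 = (m - 1) + 1 := by omega
        rw [he]
        rfl
      rw [ht]
      have h44 := four_f_le q f hq hf1
      have hqf1 : 1 ≤ q ^ f := Nat.one_le_pow _ _ (by omega)
      calc 2 * (q ^ f * (f + 1) + f)
          = q ^ f * (2 * f + 2) + 2 * f := by ring
        _ ≤ q ^ f * (2 * f + 2) + q ^ f * (2 * f + 2) := by
            have : 2 * f ≤ q ^ f * (2 * f + 2) := by nlinarith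
            omega
        _ = q ^ f * (4 * f + 4) := by ring
        _ ≤ q ^ f * q ^ f := Nat.mul_le_mul_left _ h44
        _ = q ^ (2 * f) := by rw [← pow_add]; ring_nf
        _ ≤ q ^ tower q (m - 1) := Nat.pow_le_pow_right (by omega) hft
  obtain ⟨F, hF1, hFt, hgood⟩ := key n hn
  have hzf : zf n q ≤ F := Nat.sInf_le (fun w hw => hgood w (le_of_eq hw.symm))
  omega
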